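/- Let Z and Y be real Hilbert spaces, B : Z → Y a Fredholm bounded linear operator, and Q : Z → Z a bounded self-adjoint linear operator such that ⟪Qz, z⟫ ≥ α‖z‖² for all z ∈ ker B, for some α > 0. Define F : Z × Y → Z × Y by F(z, λ) = (Qz + B†λ, Bz). Then there exists β > 0 such that for all (z, λ), (z̄, λ̄) ∈ Z × Y: ‖z − z̄‖ ≤ β ‖F(z, λ) − F(z̄, λ̄)‖; that is, the z-component of any solution of F(z, λ) = ψ depends Lipschitz continuously on ψ. -/

import Mathlib

/-!
Split `w = u + v` with `u ∈ ker B` and `v ⊥ ker B`. Since `B` has closed range, the open mapping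
theorem bounds `‖v‖ ≤ C ‖B w‖`. Testing `Q w + B† μ` against `u` kills `B† μ`, so coercivity on
`ker B` gives `α ‖u‖ ≤ ‖Q w + B† μ‖ + ‖Q‖ ‖v‖`. Linearity reduces the Lipschitz estimate
to this one.
-/

open ContinuousLinearMap

theorem exists_norm_starProjection_orthogonal_ker_le {𝕜 E F : Type*} [RCLike 𝕜]
    [NormedAddCommGroup E] [InnerProductSpace 𝕜 E] [CompleteSpace E]
    [NormedAddCommGroup F] [NormedSpace 𝕜 F] [CompleteSpace F]
    (B : E →L[𝕜] F) (hB : IsClosed (LinearMap.range (B : E →ₗ[𝕜] F) : Set F)) :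
    ∃ C ≥ 0, ∀ w, ‖(LinearMap.ker (B : E →ₗ[𝕜] F))ᗮ.starProjection w‖ ≤ C * ‖B w‖ := by
  have := hB.completeSpace_coe
  obtain ⟨C, hC, hpre⟩ := B.rangeRestrict.exists_preimage_norm_le
    (LinearMap.surjective_rangeRestrict _)
  refine ⟨C, hC.le, fun w => ?_⟩
  obtain ⟨x, hBx, hx⟩ := hpre (B.rangeRestrict w)
  have hwx : w - x ∈ LinearMap.ker (B : E →ₗ[𝕜] F) := by
    rw [LinearMap.mem_ker]
    simpa [sub_eq_zero] using (congrArg Subtype.val hBx).symm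
  -- `w` and `x` differ by a kernel element, which the projection onto `(ker B)ᗮ` kills.
  have hproj : (LinearMap.ker (B : E →ₗ[𝕜] F))ᗮ.starProjection w =
      (LinearMap.ker (B : E →ₗ[𝕜] F))ᗮ.starProjection x := by
    rw [← sub_eq_zero, ← map_sub, Submodule.starProjection_apply_eq_zero_iff]
    exact Submodule.le_orthogonal_orthogonal _ hwx
  calc _ = ‖(LinearMap.ker (B : E →ₗ[𝕜] F))ᗮ.starProjection x‖ := by rw [hproj]
    _ ≤ ‖x‖ := Submodule.norm_starProjection_apply_le _ x
    _ ≤ C * ‖B.rangeRestrict w‖ := hx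

section Saddle

variable {Z Y : Type*} [NormedAddCommGroup Z] [InnerProductSpace ℝ Z] [CompleteSpace Z]
  [NormedAddCommGroup Y] [InnerProductSpace ℝ Y] [CompleteSpace Y]

theorem mul_norm_le_of_mem_ker {B : Z →L[ℝ] Y} {Q : Z →L[ℝ] Z} {α : ℝ}
    (hQcoer : ∀ z ∈ LinearMap.ker (B : Z →ₗ[ℝ] Y), α * ‖z‖ ^ 2 ≤ (inner ℝ (Q z) z : ℝ))
    {u : Z} (hu : u ∈ LinearMap.ker (B : Z →ₗ[ℝ] Y)) (v : Z) (μ : Y) :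
    α * ‖u‖ ≤ ‖Q (u + v) + adjoint B μ‖ + ‖Q‖ * ‖v‖ := by
  have hadj : (inner ℝ (adjoint B μ) u : ℝ) = 0 := by
    rw [adjoint_inner_left, show B u = 0 from hu, inner_zero_right]
  have hsplit : (inner ℝ (Q u) u : ℝ) = inner ℝ (Q (u + v) + adjoint B μ) u - inner ℝ (Q v) u := by
    rw [inner_add_left, hadj, map_add, inner_add_left]
    ring
  have hQv : -(inner ℝ (Q v) u : ℝ) ≤ ‖Q‖ * ‖v‖ * ‖u‖ :=
    calc -(inner ℝ (Q v) u : ℝ) ≤ ‖Q v‖ * ‖u‖ := (neg_le_abs _).trans (abs_real_inner_le_norm _ _)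
      _ ≤ ‖Q‖ * ‖v‖ * ‖u‖ := by gcongr; exact Q.le_opNorm v
  have key : α * ‖u‖ * ‖u‖ ≤ (‖Q (u + v) + adjoint B μ‖ + ‖Q‖ * ‖v‖) * ‖u‖ := by
    have := hQcoer u hu
    have := real_inner_le_norm (Q (u + v) + adjoint B μ) u
    nlinarith
  rcases (norm_nonneg u).eq_or_lt with h | h
  · rw [← h, mul_zero]
    positivity
  · exact le_of_mul_le_mul_right key h

theorem mul_norm_le_of_norm_starProjection_orthogonal_ker_le {B : Z →L[ℝ] Y} {Q : Z →L[ℝ] Z}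
    {α C : ℝ} (hα : 0 < α)
    (hQcoer : ∀ z ∈ LinearMap.ker (B : Z →ₗ[ℝ] Y), α * ‖z‖ ^ 2 ≤ (inner ℝ (Q z) z : ℝ))
    (hC : ∀ w, ‖(LinearMap.ker (B : Z →ₗ[ℝ] Y))ᗮ.starProjection w‖ ≤ C * ‖B w‖) (w : Z) (μ : Y) :
    α * ‖w‖ ≤ ‖Q w + adjoint B μ‖ + (‖Q‖ + α) * (C * ‖B w‖) := by
  set N := LinearMap.ker (B : Z →ₗ[ℝ] Y)
  have hw : N.starProjection w + Nᗮ.starProjection w = w :=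
    N.starProjection_add_starProjection_orthogonal w
  have hu := mul_norm_le_of_mem_ker hQcoer (N.starProjection_apply_mem w) (Nᗮ.starProjection w) μ
  rw [hw] at hu
  have hv : (‖Q‖ + α) * ‖Nᗮ.starProjection w‖ ≤ (‖Q‖ + α) * (C * ‖B w‖) := by
    gcongr
    exact hC w
  calc α * ‖w‖ ≤ α * ‖N.starProjection w‖ + α * ‖Nᗮ.starProjection w‖ := by
        rw [← mul_add]
        gcongr
        exact (congrArg norm hw).ge.trans (norm_add_le _ _)
    _ ≤ ‖Q w + adjoint B μ‖ + (‖Q‖ + α) * (C * ‖B w‖) := by linarith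

theorem exists_norm_le_mul_norm_add_norm {B : Z →L[ℝ] Y}
    (hB : IsClosed (LinearMap.range (B : Z →ₗ[ℝ] Y) : Set Y)) {Q : Z →L[ℝ] Z} {α : ℝ} (hα : 0 < α)
    (hQcoer : ∀ z ∈ LinearMap.ker (B : Z →ₗ[ℝ] Y), α * ‖z‖ ^ 2 ≤ (inner ℝ (Q z) z : ℝ)) :
    ∃ β > (0 : ℝ), ∀ (w : Z) (μ : Y), ‖w‖ ≤ β * (‖Q w + adjoint B μ‖ + ‖B w‖) := by
  obtain ⟨C, hC0, hC⟩ := exists_norm_starProjection_orthogonal_ker_le B hB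
  set K := (‖Q‖ + α) * C
  refine ⟨(1 + K) / α, by positivity, fun w μ => ?_⟩
  have hK : 0 ≤ K := by positivity
  have h := mul_norm_le_of_norm_starProjection_orthogonal_ker_le hα hQcoer hC w μ
  rw [div_mul_eq_mul_div, le_div_iff₀' hα]
  nlinarith [norm_nonneg (Q w + adjoint B μ), norm_nonneg (B w)]

end Saddle

theorem stmt11_general
    {Z Y : Type*} [NormedAddCommGroup Z] [InnerProductSpace ℝ Z] [CompleteSpace Z]
    [NormedAddCommGroup Y] [InnerProductSpace ℝ Y] [CompleteSpace Y]
    (B : Z →L[ℝ] Y)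
    (hBrange : IsClosed (LinearMap.range (B : Z →ₗ[ℝ] Y) : Set Y))
    (Q : Z →L[ℝ] Z)
    (α : ℝ) (hα : 0 < α)
    (hQcoer : ∀ z ∈ LinearMap.ker (B : Z →ₗ[ℝ] Y), α * ‖z‖ ^ 2 ≤ (inner ℝ (Q z) z : ℝ)) :
    ∃ β > (0 : ℝ), ∀ (z zb : Z) (lam lamb : Y),
      ‖z - zb‖ ≤ β *
        (‖(Q z + (ContinuousLinearMap.adjoint B) lam) -
           (Q zb + (ContinuousLinearMap.adjoint B) lamb)‖ + ‖B z - B zb‖) := by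
  obtain ⟨β, hβ, hbound⟩ := exists_norm_le_mul_norm_add_norm hBrange hα hQcoer
  refine ⟨β, hβ, fun z zb lam lamb => ?_⟩
  have hdiff : (Q z + adjoint B lam) - (Q zb + adjoint B lamb) =
      Q (z - zb) + adjoint B (lam - lamb) := by
    simp only [map_sub]
    abel
  rw [hdiff, ← map_sub]
  exact hbound (z - zb) (lam - lamb)

/-- Let `Z`, `Y` be real Hilbert spaces, `B : Z → Y` Fredholm,
`Q : Z → Z` bounded self-adjoint with `⟪Qz, z⟫ ≥ α‖z‖²` on `ker B` for some
`α > 0`.  Define `F(z, λ) = (Qz + B†λ, Bz)`.  Then there exists `β > 0` such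
that for all `(z, λ), (z̄, λ̄)`:
`‖z − z̄‖ ≤ β ‖F(z, λ) − F(z̄, λ̄)‖`, with the norm `‖(u, v)‖ = ‖u‖ + ‖v‖` on the
product; i.e. the `z`-component of a solution of `F(z, λ) = ψ` depends Lipschitz
continuously on `ψ`. -/
theorem stmt11
    {Z Y : Type*} [NormedAddCommGroup Z] [InnerProductSpace ℝ Z] [CompleteSpace Z]
    [NormedAddCommGroup Y] [InnerProductSpace ℝ Y] [CompleteSpace Y]
    (B : Z →L[ℝ] Y)
    (hBker : FiniteDimensional ℝ (LinearMap.ker (B : Z →ₗ[ℝ] Y)))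
    (hBrange : IsClosed (LinearMap.range (B : Z →ₗ[ℝ] Y) : Set Y))
    (hBcodim : FiniteDimensional ℝ (Y ⧸ LinearMap.range (B : Z →ₗ[ℝ] Y)))
    (Q : Z →L[ℝ] Z)
    (hQsym : ∀ z₁ z₂ : Z, (inner ℝ (Q z₁) z₂ : ℝ) = inner ℝ (Q z₂) z₁)
    (α : ℝ) (hα : 0 < α)
    (hQcoer : ∀ z ∈ LinearMap.ker (B : Z →ₗ[ℝ] Y), α * ‖z‖ ^ 2 ≤ (inner ℝ (Q z) z : ℝ)) :
    ∃ β > (0 : ℝ), ∀ (z zb : Z) (lam lamb : Y),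
      ‖z - zb‖ ≤ β *
        (‖(Q z + (ContinuousLinearMap.adjoint B) lam) -
           (Q zb + (ContinuousLinearMap.adjoint B) lamb)‖ + ‖B z - B zb‖) :=
  stmt11_general B hBrange Q α hα hQcoer
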